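/- Let a, b ∈ ℂ with |a|² + |b|² = 1 and let U := [[a, −conj(b)], [b, conj(a)]] ∈ SU(2), and let θ ∈ ℝ. Then the (2,1) entry of the first Reichardt iterate U₁ has modulus |b| · |1 − (2 − 2cos θ)(1 − |b|²)|. -/

import Mathlib

/-!
Write `e = exp(iθ/2)`, so that `D(θ) = diag(e, e⁻¹)`, and treat `conj a`, `conj b` as independent
entries `a'`, `b'` with `a a' + b b' = 1`; then `U⁻¹ = [[a', b'], [-b, a]]` and the `(2,1)` entry of
`U₁` is the Laurent polynomial `b (a a' (e² + e⁻² - 1) + b b') e⁻²` over any field. Over `ℂ`,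
`e² + e⁻² = 2 cos θ`, `|e⁻²| = 1` and `a a' = |a|² = 1 - |b|²`.
-/

open Complex Matrix

/-- The z-rotation `D(θ) = diag(e^{iθ/2}, e^{-iθ/2})`. -/
noncomputable def Dmat (θ : ℝ) : Matrix (Fin 2) (Fin 2) ℂ :=
  !![Complex.exp (Complex.I * θ / 2), 0; 0, Complex.exp (-(Complex.I * θ / 2))]

/-- The Reichardt iteration `U₀ = U`, `U_{k+1} = U_k D(θ) U_k⁻¹ D(θ) U_k D(θ)⁻²`. -/
noncomputable def reichardt (θ : ℝ) (U : Matrix (Fin 2) (Fin 2) ℂ) :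
    ℕ → Matrix (Fin 2) (Fin 2) ℂ
  | 0 => U
  | k + 1 =>
      reichardt θ U k * Dmat θ * (reichardt θ U k)⁻¹ * Dmat θ * reichardt θ U k *
        (Dmat θ ^ 2)⁻¹

open ComplexConjugate

section Field

variable {K : Type*} [Field K]

theorem Matrix.inv_fin_two_of_det_eq_one {a b a' b' : K} (h : a * a' + b * b' = 1) :
    (!![a, -b'; b, a'] : Matrix (Fin 2) (Fin 2) K)⁻¹ = !![a', b'; -b, a] := by
  refine inv_eq_right_inv ?_
  ext i j
  fin_cases i <;> fin_cases j <;> simp [mul_apply] <;>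
    [linear_combination h; ring; ring; linear_combination h]

theorem Matrix.inv_sq_of_diag_inv {e : K} (he : e ≠ 0) :
    ((!![e, 0; 0, e⁻¹] : Matrix (Fin 2) (Fin 2) K) ^ 2)⁻¹ = !![e⁻¹ ^ 2, 0; 0, e ^ 2] := by
  refine inv_eq_right_inv ?_
  ext i j
  fin_cases i <;> fin_cases j <;> simp [sq, mul_apply] <;> field_simp

theorem reichardt_step_apply_one_zero {a b a' b' e : K} (h : a * a' + b * b' = 1)
    (he : e ≠ 0) :
    (!![a, -b'; b, a'] * !![e, 0; 0, e⁻¹] * (!![a, -b'; b, a'])⁻¹ * !![e, 0; 0, e⁻¹] *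
        !![a, -b'; b, a'] * ((!![e, 0; 0, e⁻¹] : Matrix (Fin 2) (Fin 2) K) ^ 2)⁻¹) 1 0 =
      b * (a * a' * (e ^ 2 + e⁻¹ ^ 2 - 1) + b * b') * e⁻¹ ^ 2 := by
  rw [inv_fin_two_of_det_eq_one h, inv_sq_of_diag_inv he]
  simp only [mul_apply, Fin.sum_univ_two, of_apply, cons_val', cons_val_zero, cons_val_one,
    empty_val', cons_val_fin_one]
  field_simp
  ring

end Field

theorem Dmat_eq (θ : ℝ) :
    Dmat θ = !![exp (I * θ / 2), 0; 0, (exp (I * θ / 2))⁻¹] := by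
  rw [Dmat, exp_neg]

theorem exp_half_sq_add_inv_sq (θ : ℝ) :
    exp (I * θ / 2) ^ 2 + (exp (I * θ / 2))⁻¹ ^ 2 = 2 * Real.cos θ := by
  rw [← exp_nat_mul, ← exp_neg, ← exp_nat_mul, ofReal_cos, two_cos]
  congr 2 <;> push_cast <;> ring

/-- For `U = [[a, -conj b],[b, conj a]] ∈ SU(2)`, the `(2,1)` entry of the first Reichardt
iterate has modulus `|b|·|1 − (2 − 2cos θ)(1 − |b|²)|`. -/
theorem reichardt_one_offdiag_abs (a b : ℂ)
    (h : ‖a‖ ^ 2 + ‖b‖ ^ 2 = 1) (θ : ℝ) :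
    ‖(reichardt θ !![a, -(starRingEnd ℂ b); b, starRingEnd ℂ a] 1) 1 0‖ =
      ‖b‖ * |1 - (2 - 2 * Real.cos θ) * (1 - ‖b‖ ^ 2)| := by
  have hnorm : (‖a‖ : ℂ) ^ 2 + ‖b‖ ^ 2 = 1 := by exact_mod_cast h
  have hab : a * conj a + b * conj b = 1 := by rw [mul_conj', mul_conj', hnorm]
  have hentry := reichardt_step_apply_one_zero hab (exp_ne_zero (I * θ / 2))
  rw [← Dmat_eq, exp_half_sq_add_inv_sq, mul_conj', mul_conj'] at hentry
  have hfactor : (‖a‖ : ℂ) ^ 2 * (2 * Real.cos θ - 1) + ‖b‖ ^ 2 =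
      ((1 - (2 - 2 * Real.cos θ) * (1 - ‖b‖ ^ 2) : ℝ) : ℂ) := by
    push_cast
    linear_combination (2 * cos (θ : ℂ) - 1) * hnorm
  have hphase : ‖(exp (I * θ / 2))⁻¹ ^ 2‖ = 1 := by
    simp [norm_exp]
  rw [reichardt, reichardt, hentry, hfactor, norm_mul, norm_mul, hphase, norm_real,
    Real.norm_eq_abs, mul_one]
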